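/- Let Γ be a nonuniform lattice in G = SL(2,ℝ) with −I ∈ Γ, let Λ be a nontrivial maximal unipotent subgroup of Γ, and let v ∈ ℝ² ∖ {0} be such that γv = v for every γ ∈ Λ. Then there exists τ = τ(Γ,v) < ∞ such that Card(gΓv ∩ B(0,R)) < τ·(R² + 1) for all R > 0 and all g ∈ G, where gΓv = {g·γ·v : γ ∈ Γ} as a subset of ℝ². -/

import Mathlib

open MeasureTheory Metric
open scoped ENNReal Pointwise

noncomputable section

/-- `ℝ²` as a Euclidean space. -/
abbrev Euc2 : Type := EuclideanSpace ℝ (Fin 2)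

/-- The linear action of a `2 × 2` matrix on `ℝ²`. -/
def matVec (g : Matrix (Fin 2) (Fin 2) ℝ) (x : Euc2) : Euc2 :=
  (EuclideanSpace.equiv (Fin 2) ℝ).symm (g.mulVec (EuclideanSpace.equiv (Fin 2) ℝ x))

abbrev SL2 : Type := Matrix.SpecialLinearGroup (Fin 2) ℝ

/-- `SL(2,ℝ)` topologized as a subspace of the `2 × 2` real matrices. -/
instance : TopologicalSpace SL2 :=
  TopologicalSpace.induced (fun g : SL2 => (g : Matrix (Fin 2) (Fin 2) ℝ)) inferInstance

instance : MeasurableSpace SL2 := borel _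
instance : BorelSpace SL2 := ⟨rfl⟩

/-- A nonuniform lattice in `G = SL(2,ℝ)`: a discrete subgroup admitting a Borel
fundamental domain of finite positive Haar measure, with noncompact quotient `G/Γ`.
(A Haar measure on `G` is a left-invariant Borel measure, positive on nonempty open
sets and finite on compact sets.) -/
structure IsNonuniformLattice (Γ : Subgroup SL2) : Prop where
  discrete : DiscreteTopology Γ
  finiteCovolume : ∃ (η : Measure SL2) (F : Set SL2),
    (∀ g : SL2, Measure.map (fun x => g * x) η = η) ∧
    (∀ U : Set SL2, IsOpen U → U.Nonempty → 0 < η U) ∧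
    (∀ C : Set SL2, IsCompact C → η C < ⊤) ∧
    MeasurableSet F ∧ (∀ g : SL2, ∃! γ : Γ, g * (γ : SL2) ∈ F) ∧ 0 < η F ∧ η F < ⊤
  noncompact : ¬ ∃ C : Set SL2, IsCompact C ∧ ∀ g : SL2, ∃ γ : Γ, g * (γ : SL2) ∈ C

/-- A matrix `γ ∈ SL(2,ℝ)` is unipotent if `(γ − I)² = 0`. -/
def IsUnipotent (γ : SL2) : Prop :=
  ((γ : Matrix (Fin 2) (Fin 2) ℝ) - 1) ^ 2 = 0

/-- The orbit `gΓv ⊆ ℝ²`. -/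
def orbitSet (Γ : Subgroup SL2) (g : SL2) (v : Euc2) : Set Euc2 :=
  {w | ∃ γ ∈ Γ, matVec ((g * γ : SL2) : Matrix (Fin 2) (Fin 2) ℝ) v = w}

namespace SB

open Matrix Filter

abbrev V2 : Type := Fin 2 → ℝ
abbrev M2 : Type := Matrix (Fin 2) (Fin 2) ℝ

def pp (y : V2) : V2 := ![-(y 1), y 0]

def det2 (x y : V2) : ℝ := x 0 * y 1 - x 1 * y 0

lemma dot_eq (a b : V2) : a ⬝ᵥ b = a 0 * b 0 + a 1 * b 1 := by
  simp [dotProduct, Fin.sum_univ_two]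

lemma mulVec_eq (h : M2) (x : V2) (i : Fin 2) : (h *ᵥ x) i = h i 0 * x 0 + h i 1 * x 1 := by
  simp [Matrix.mulVec, dotProduct, Fin.sum_univ_two]

lemma vecMul_eq (x : V2) (h : M2) (j : Fin 2) : (x ᵥ* h) j = x 0 * h 0 j + x 1 * h 1 j := by
  simp [Matrix.vecMul, dotProduct, Fin.sum_univ_two]

lemma v2_ne_zero {y : V2} (hy : y ≠ 0) : y 0 ≠ 0 ∨ y 1 ≠ 0 := by
  by_contra hc
  push_neg at hc
  exact hy (by funext i; fin_cases i <;> simp [hc.1, hc.2])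

lemma pp_dot (y x : V2) : pp y ⬝ᵥ x = det2 y x := by
  rw [dot_eq]
  simp only [pp, Matrix.cons_val_zero, Matrix.cons_val_one, Matrix.head_cons, det2]
  ring

lemma pp_ne_zero {y : V2} (hy : y ≠ 0) : pp y ≠ 0 := by
  intro h
  rcases v2_ne_zero hy with h0 | h1
  · exact h0 (by have := congrFun h 1; simpa [pp] using this)
  · exact h1 (by have := congrFun h 0; simpa [pp] using this)

lemma perp2 {y x : V2} (hy : y ≠ 0) (h : x ⬝ᵥ y = 0) : ∃ t : ℝ, x = t • pp y := by
  rw [dot_eq] at h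
  rcases v2_ne_zero hy with h0 | h1
  · refine ⟨x 1 / y 0, ?_⟩
    funext i
    rw [Pi.smul_apply, smul_eq_mul]
    fin_cases i
    · show x 0 = x 1 / y 0 * pp y 0
      simp only [pp, Matrix.cons_val_zero]
      field_simp
      linear_combination h
    · show x 1 = x 1 / y 0 * pp y 1
      simp only [pp, Matrix.cons_val_one, Matrix.head_cons, Matrix.cons_val_zero]
      field_simp
  · refine ⟨-(x 0) / y 1, ?_⟩
    funext i
    rw [Pi.smul_apply, smul_eq_mul]
    fin_cases i
    · show x 0 = -(x 0) / y 1 * pp y 0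
      simp only [pp, Matrix.cons_val_zero]
      field_simp
    · show x 1 = -(x 0) / y 1 * pp y 1
      simp only [pp, Matrix.cons_val_one, Matrix.head_cons, Matrix.cons_val_zero]
      field_simp
      linear_combination h

lemma det2_zero_parallel {x y : V2} (hx : x ≠ 0) (h : det2 x y = 0) : ∃ t : ℝ, y = t • x := by
  unfold det2 at h
  rcases v2_ne_zero hx with h0 | h1
  · refine ⟨y 0 / x 0, ?_⟩
    funext i
    rw [Pi.smul_apply, smul_eq_mul]
    fin_cases i
    · show y 0 = y 0 / x 0 * x 0
      field_simp
    · show y 1 = y 0 / x 0 * x 1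
      field_simp
      linear_combination h
  · refine ⟨y 1 / x 1, ?_⟩
    funext i
    rw [Pi.smul_apply, smul_eq_mul]
    fin_cases i
    · show y 0 = y 1 / x 1 * x 0
      field_simp
      linear_combination -h
    · show y 1 = y 1 / x 1 * x 1
      field_simp

lemma det2_mulVec (h : M2) (x y : V2) : det2 (h *ᵥ x) (h *ᵥ y) = h.det * det2 x y := by
  simp [det2, mulVec_eq, Matrix.det_fin_two]; ring

lemma det2_smul_left (t : ℝ) (x y : V2) : det2 (t • x) y = t * det2 x y := by
  simp [det2]; ring

lemma vmv_mulVec (w r x : V2) : vecMulVec w r *ᵥ x = (r ⬝ᵥ x) • w := by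
  funext i; simp [mulVec_eq, Matrix.vecMulVec_apply, dot_eq]; ring

lemma vecMul_vmv (x w r : V2) : x ᵥ* vecMulVec w r = (x ⬝ᵥ w) • r := by
  funext j; simp [vecMul_eq, Matrix.vecMulVec_apply, dot_eq]; ring

lemma mul_vmv (A : M2) (w r : V2) : A * vecMulVec w r = vecMulVec (A *ᵥ w) r := by
  ext i j
  fin_cases i <;> simp [Matrix.mul_apply, Fin.sum_univ_two, Matrix.vecMulVec_apply, mulVec_eq] <;> ring

lemma vmv_mul (w r : V2) (A : M2) : vecMulVec w r * A = vecMulVec w (r ᵥ* A) := by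
  ext i j
  simp [Matrix.mul_apply, Fin.sum_univ_two, Matrix.vecMulVec_apply, vecMul_eq]; ring

lemma vmv_mul_vmv (w r w' r' : V2) :
    vecMulVec w r * vecMulVec w' r' = (r ⬝ᵥ w') • vecMulVec w r' := by
  ext i j
  simp [Matrix.mul_apply, Fin.sum_univ_two, Matrix.vecMulVec_apply, dot_eq]; ring

lemma vmv_smul_left (t : ℝ) (w r : V2) : vecMulVec (t • w) r = t • vecMulVec w r := by
  ext i j; simp [Matrix.vecMulVec_apply]; ring

lemma vmv_smul_right (t : ℝ) (w r : V2) : vecMulVec w (t • r) = t • vecMulVec w r := by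
  ext i j; simp [Matrix.vecMulVec_apply]; ring

lemma vmv_ne_zero {w r : V2} (hw : w ≠ 0) (hr : r ≠ 0) : vecMulVec w r ≠ 0 := by
  rcases v2_ne_zero hw with hw' | hw' <;> rcases v2_ne_zero hr with hr' | hr' <;>
  · intro h
    first
    | exact (mul_ne_zero hw' hr') (by simpa [Matrix.vecMulVec_apply] using congrFun (congrFun h 0) 0)
    | exact (mul_ne_zero hw' hr') (by simpa [Matrix.vecMulVec_apply] using congrFun (congrFun h 0) 1)
    | exact (mul_ne_zero hw' hr') (by simpa [Matrix.vecMulVec_apply] using congrFun (congrFun h 1) 0)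
    | exact (mul_ne_zero hw' hr') (by simpa [Matrix.vecMulVec_apply] using congrFun (congrFun h 1) 1)

lemma unip_structure {N : M2} {v₀ : V2} (hv : v₀ ≠ 0) (hN : N ≠ 0) (hN2 : N * N = 0)
    (hNv : N *ᵥ v₀ = 0) :
    ∃ τ : ℝ, τ ≠ 0 ∧ N = vecMulVec v₀ (τ • pp v₀) := by
  -- each row of N is orthogonal to v₀
  have hrow : ∀ i, (fun j => N i j) ⬝ᵥ v₀ = 0 := by
    intro i
    have := congrFun hNv i
    simpa [mulVec_eq, dot_eq] using this
  choose t ht using fun i => perp2 hv (hrow i)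
  have hNt : N = vecMulVec (fun i => t i) (pp v₀) := by
    ext i j
    have := congrFun (ht i) j
    simpa [Matrix.vecMulVec_apply] using this
  -- N² = 0 forces (pp v₀) ⬝ᵥ t = 0
  have hN2' : ((pp v₀ ⬝ᵥ fun i => t i) • vecMulVec (fun i => t i) (pp v₀) : M2) = 0 := by
    rw [← vmv_mul_vmv, ← hNt]; exact hN2
  have hdot : (pp v₀ ⬝ᵥ fun i => t i) = 0 := by
    rcases smul_eq_zero.mp hN2' with h | h
    · exact h
    · exact absurd (hNt.trans h) hN
  have hdot' : (fun i => t i) ⬝ᵥ pp v₀ = 0 := by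
    rw [dotProduct_comm]; exact hdot
  obtain ⟨s, hs⟩ := perp2 (pp_ne_zero hv) hdot'
  have hppp : pp (pp v₀) = -v₀ := by
    funext i; fin_cases i <;> simp [pp]
  have htv : (fun i => t i) = (-s) • v₀ := by
    rw [hs, hppp]; funext i; simp
  have hτ : N = (-s) • vecMulVec v₀ (pp v₀) := by
    rw [hNt, htv, vmv_smul_left]
  refine ⟨-s, ?_, ?_⟩
  · intro h
    exact hN (by rw [hτ, h, zero_smul])
  · rw [vmv_smul_right]; exact hτ

section
open Matrix Filter

lemma coe_mul_inv (a : SL2) : (a : M2) * ((a⁻¹ : SL2) : M2) = 1 := by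
  rw [← Matrix.SpecialLinearGroup.coe_mul]; simp

lemma coe_inv_mul (a : SL2) : ((a⁻¹ : SL2) : M2) * (a : M2) = 1 := by
  rw [← Matrix.SpecialLinearGroup.coe_mul]; simp

lemma dot_inv_mulVec (γ : SL2) (q v₀ : V2) (hqv : q ⬝ᵥ v₀ = 0) :
    q ⬝ᵥ (((γ⁻¹ : SL2) : M2) *ᵥ v₀) = -(q ⬝ᵥ ((γ : M2) *ᵥ v₀)) := by
  rw [dot_eq] at hqv
  rw [Matrix.SpecialLinearGroup.coe_inv, Matrix.adjugate_fin_two]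
  rw [dot_eq, dot_eq, mulVec_eq, mulVec_eq, mulVec_eq, mulVec_eq]
  simp only [Matrix.cons_val', Matrix.cons_val_zero, Matrix.cons_val_one, Matrix.head_cons,
    Matrix.empty_val', Matrix.cons_val_fin_one, Matrix.head_fin_const, Matrix.of_apply]
  linear_combination ((γ : M2) 0 0 + (γ : M2) 1 1) * hqv

/-- From discreteness of `Γ`: any sequence in `Γ` converging (entrywise) to the identity
matrix is eventually the identity. -/
lemma discrete_eventually_one (Γ : Subgroup SL2) (hd : DiscreteTopology Γ)
    (a : ℕ → SL2) (ha : ∀ n, a n ∈ Γ)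
    (hlim : Tendsto (fun n => ((a n : SL2) : M2)) atTop (nhds 1)) :
    ∀ᶠ n in atTop, a n = 1 := by
  have h1 : IsOpen ({1} : Set Γ) := isOpen_discrete _
  obtain ⟨U, hU, hU1⟩ := isOpen_induced_iff.mp h1
  obtain ⟨T, hT, hTU⟩ := isOpen_induced_iff.mp hU
  have h1U : ((1 : Γ) : SL2) ∈ U := by
    have h : (1 : Γ) ∈ (Subtype.val ⁻¹' U : Set Γ) := by rw [hU1]; rfl
    exact h
  have h1T : (1 : M2) ∈ T := by
    have : ((1 : SL2) : M2) ∈ T := by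
      rw [← Matrix.SpecialLinearGroup.coe_one (R := ℝ) (n := Fin 2)] at *
      have := h1U
      rw [← hTU] at this
      exact this
    simpa using this
  have hev : ∀ᶠ n in atTop, ((a n : SL2) : M2) ∈ T := hlim.eventually (hT.eventually_mem h1T)
  filter_upwards [hev] with n hn
  have haU : (a n : SL2) ∈ U := by rw [← hTU]; exact hn
  have : (⟨a n, ha n⟩ : Γ) ∈ (Subtype.val ⁻¹' U : Set Γ) := haU
  rw [hU1] at this
  have := Subtype.ext_iff.mp this
  simpa using this

def shimStep (v₀ q : V2) (p : V2 × V2) : V2 × V2 :=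
  (v₀ - (q ⬝ᵥ p.1) • p.1, q - (q ⬝ᵥ p.1) • p.2)

def conjSeq (u₀ γ : SL2) : ℕ → SL2
  | 0 => γ
  | n + 1 => conjSeq u₀ γ n * u₀ * (conjSeq u₀ γ n)⁻¹

lemma conjSeq_mem (Γ : Subgroup SL2) {u₀ γ : SL2} (hu : u₀ ∈ Γ) (hγ : γ ∈ Γ) :
    ∀ n, conjSeq u₀ γ n ∈ Γ
  | 0 => hγ
  | n + 1 => Γ.mul_mem (Γ.mul_mem (conjSeq_mem Γ hu hγ n) hu)
      (Γ.inv_mem (conjSeq_mem Γ hu hγ n))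

lemma inv_one_add_vmv {γ : SL2} {w r : V2} (hc : (γ : M2) = 1 + vecMulVec w r)
    (h : r ⬝ᵥ w = 0) : ((γ⁻¹ : SL2) : M2) = 1 - vecMulVec w r := by
  rw [dot_eq] at h
  rw [Matrix.SpecialLinearGroup.coe_inv, hc, Matrix.adjugate_fin_two]
  ext i j
  fin_cases i <;> fin_cases j <;>
    simp [Matrix.vecMulVec_apply, Matrix.one_apply, Matrix.add_apply, Matrix.sub_apply] <;>
    linarith

lemma dot_sub_smul_sub (a b x y : V2) (s t : ℝ) :
    (a - s • b) ⬝ᵥ (x - t • y)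
      = a ⬝ᵥ x - t * (a ⬝ᵥ y) - s * (b ⬝ᵥ x) + s * t * (b ⬝ᵥ y) := by
  simp [dot_eq]; ring

lemma sub_smul_dot (a b x : V2) (s : ℝ) : (a - s • b) ⬝ᵥ x = a ⬝ᵥ x - s * (b ⬝ᵥ x) := by
  simp [dot_eq]; try ring

lemma dot_sub_smul (a x y : V2) (t : ℝ) : a ⬝ᵥ (x - t • y) = a ⬝ᵥ x - t * (a ⬝ᵥ y) := by
  simp [dot_eq]; try ring

lemma dot_add_smul (a x y : V2) (t : ℝ) : a ⬝ᵥ (x + t • y) = a ⬝ᵥ x + t * (a ⬝ᵥ y) := by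
  simp [dot_eq]; try ring

lemma step_matrix (v₀ q w r : V2) (hqv : q ⬝ᵥ v₀ = 0) (hrw : r ⬝ᵥ w = 0)
    (hrv : r ⬝ᵥ v₀ = -(q ⬝ᵥ w)) :
    ((1 + vecMulVec w r) * (1 + vecMulVec v₀ q) * (1 - vecMulVec w r) : M2)
      = 1 + vecMulVec (v₀ - (q ⬝ᵥ w) • w) (q - (q ⬝ᵥ w) • r) := by
  have e1 : ((1 + vecMulVec w r) * (1 + vecMulVec v₀ q) * (1 - vecMulVec w r) : M2)
      = 1 + vecMulVec v₀ q + vecMulVec w r * vecMulVec v₀ q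
        - vecMulVec v₀ q * vecMulVec w r - vecMulVec w r * vecMulVec w r
        - vecMulVec w r * vecMulVec v₀ q * vecMulVec w r := by noncomm_ring
  have hAN : vecMulVec w r * vecMulVec v₀ q = (-(q ⬝ᵥ w)) • vecMulVec w q := by
    rw [vmv_mul_vmv, hrv]
  have hNA : vecMulVec v₀ q * vecMulVec w r = (q ⬝ᵥ w) • vecMulVec v₀ r := by
    rw [vmv_mul_vmv]
  have hAA : vecMulVec w r * vecMulVec w r = 0 := by
    rw [vmv_mul_vmv, hrw, zero_smul]
  have hANA : vecMulVec w r * vecMulVec v₀ q * vecMulVec w r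
      = (-(q ⬝ᵥ w) * (q ⬝ᵥ w)) • vecMulVec w r := by
    rw [hAN, smul_mul_assoc, vmv_mul_vmv, smul_smul]
  rw [e1, hANA, hAN, hNA, hAA]
  ext i j
  fin_cases i <;> fin_cases j <;>
    simp [Matrix.vecMulVec_apply, Matrix.one_apply, Matrix.add_apply, Matrix.sub_apply,
      Matrix.smul_apply, Pi.sub_apply, Pi.smul_apply, smul_eq_mul] <;>
    ring

lemma tendsto_vmv (W R : ℕ → V2) (LW LR : V2) (hW : Tendsto W atTop (nhds LW))
    (hR : Tendsto R atTop (nhds LR)) :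
    Tendsto (fun n => (vecMulVec (W n) (R n) : M2)) atTop (nhds (vecMulVec LW LR)) := by
  apply tendsto_pi_nhds.mpr; intro i; apply tendsto_pi_nhds.mpr; intro j
  simp only [Matrix.vecMulVec_apply]
  exact (tendsto_pi_nhds.mp hW i).mul (tendsto_pi_nhds.mp hR j)

/-- Shimizu's lemma. -/
lemma shimizu (Γ : Subgroup SL2) (hd : DiscreteTopology Γ)
    (u₀ : SL2) (hu₀ : u₀ ∈ Γ) (v₀ q : V2)
    (huc : (u₀ : M2) = 1 + vecMulVec v₀ q) (hqv : q ⬝ᵥ v₀ = 0)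
    (γ : SL2) (hγ : γ ∈ Γ) :
    q ⬝ᵥ ((γ : M2) *ᵥ v₀) = 0 ∨ 1 ≤ |q ⬝ᵥ ((γ : M2) *ᵥ v₀)| := by
  by_contra hcon
  push_neg at hcon
  obtain ⟨hc0, hc1⟩ := hcon
  set X : ℕ → V2 × V2 :=
    fun n => (shimStep v₀ q)^[n] (((γ : M2) *ᵥ v₀), (q ᵥ* ((γ⁻¹ : SL2) : M2))) with hX
  have hXs : ∀ n, X (n + 1) = shimStep v₀ q (X n) := by
    intro n
    rw [hX]
    exact Function.iterate_succ_apply' (shimStep v₀ q) n _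
  set cs : ℕ → ℝ := fun n => q ⬝ᵥ (X n).1 with hcs
  have hcs0 : cs 0 = q ⬝ᵥ ((γ : M2) *ᵥ v₀) := rfl
  -- master invariant
  have master : ∀ n, ((conjSeq u₀ γ (n + 1) : SL2) : M2) = 1 + vecMulVec (X n).1 (X n).2
      ∧ (X n).2 ⬝ᵥ (X n).1 = 0 ∧ (X n).2 ⬝ᵥ v₀ = -(q ⬝ᵥ (X n).1) := by
    intro n
    induction n with
    | zero =>
      refine ⟨?_, ?_, ?_⟩
      · show ((γ * u₀ * γ⁻¹ : SL2) : M2) = _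
        rw [Matrix.SpecialLinearGroup.coe_mul, Matrix.SpecialLinearGroup.coe_mul, huc]
        rw [mul_add, mul_one, add_mul, coe_mul_inv, mul_vmv, vmv_mul]
        rfl
      · show (q ᵥ* ((γ⁻¹ : SL2) : M2)) ⬝ᵥ ((γ : M2) *ᵥ v₀) = 0
        rw [← Matrix.dotProduct_mulVec, Matrix.mulVec_mulVec, coe_inv_mul, Matrix.one_mulVec]
        exact hqv
      · show (q ᵥ* ((γ⁻¹ : SL2) : M2)) ⬝ᵥ v₀ = _
        rw [← Matrix.dotProduct_mulVec]
        exact dot_inv_mulVec γ q v₀ hqv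
    | succ n ih =>
      obtain ⟨ihm, ihrw, ihrv⟩ := ih
      have hstep := hXs n
      have h1 : ((conjSeq u₀ γ (n + 2) : SL2) : M2)
          = (1 + vecMulVec (X n).1 (X n).2) * (1 + vecMulVec v₀ q)
              * (1 - vecMulVec (X n).1 (X n).2) := by
        show ((conjSeq u₀ γ (n + 1) * u₀ * (conjSeq u₀ γ (n + 1))⁻¹ : SL2) : M2) = _
        rw [Matrix.SpecialLinearGroup.coe_mul, Matrix.SpecialLinearGroup.coe_mul, ihm, huc,
          inv_one_add_vmv ihm ihrw]
      refine ⟨?_, ?_, ?_⟩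
      · rw [h1, step_matrix v₀ q (X n).1 (X n).2 hqv ihrw ihrv, hstep]
        rfl
      · rw [hstep]
        show (q - (q ⬝ᵥ (X n).1) • (X n).2) ⬝ᵥ (v₀ - (q ⬝ᵥ (X n).1) • (X n).1) = 0
        rw [dot_sub_smul_sub, hqv, ihrw, ihrv]
        ring
      · rw [hstep]
        show (q - (q ⬝ᵥ (X n).1) • (X n).2) ⬝ᵥ v₀ = -(q ⬝ᵥ (v₀ - (q ⬝ᵥ (X n).1) • (X n).1))
        rw [sub_smul_dot, dot_sub_smul, hqv, ihrv]
        ring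
  -- the c-sequence squares down
  have hcsucc : ∀ n, cs (n + 1) = -(cs n ^ 2) := by
    intro n
    show q ⬝ᵥ (X (n + 1)).1 = _
    rw [hXs]
    show q ⬝ᵥ (v₀ - (q ⬝ᵥ (X n).1) • (X n).1) = _
    rw [dot_sub_smul, hqv]
    show 0 - cs n * cs n = -(cs n ^ 2)
    ring
  have hcne : ∀ n, cs n ≠ 0 := by
    intro n
    induction n with
    | zero => exact hc0
    | succ n ih =>
      rw [hcsucc, neg_ne_zero]
      exact pow_ne_zero 2 ih
  have hclt : ∀ n, |cs n| < 1 := by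
    intro n
    induction n with
    | zero => exact hc1
    | succ n ih =>
      rw [hcsucc, abs_neg, abs_pow]
      calc |cs n| ^ 2 ≤ |cs n| * 1 := by nlinarith [abs_nonneg (cs n)]
      _ < 1 := by rw [mul_one]; exact ih
  have hanti : StrictAnti (fun n => |cs n|) := by
    apply strictAnti_nat_of_succ_lt
    intro n
    rw [hcsucc, abs_neg, abs_pow]
    have h1 : 0 < |cs n| := abs_pos.mpr (hcne n)
    nlinarith [hclt n]
  -- norm bounds
  set κ := |cs 0| with hκ
  have hκ0 : 0 < κ := abs_pos.mpr (hcne 0)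
  have hκ1 : κ < 1 := hclt 0
  have hcsκ : ∀ n, |cs n| ≤ κ := by
    intro n
    cases n with
    | zero => exact le_rfl
    | succ m => exact (hanti (Nat.succ_pos m)).le
  have h1κ : 0 < 1 - κ := by linarith
  set W := max ‖(X 0).1‖ (‖v₀‖ / (1 - κ)) with hWdef
  set Q := max ‖(X 0).2‖ (‖q‖ / (1 - κ)) with hQdef
  have hW0 : 0 ≤ W := le_trans (norm_nonneg _) (le_max_left _ _)
  have hWb : ∀ n, ‖(X n).1‖ ≤ W := by
    intro n
    induction n with
    | zero => exact le_max_left _ _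
    | succ n ih =>
      rw [hXs]
      show ‖v₀ - (q ⬝ᵥ (X n).1) • (X n).1‖ ≤ W
      have h2 : ‖v₀ - (q ⬝ᵥ (X n).1) • (X n).1‖ ≤ ‖v₀‖ + |cs n| * ‖(X n).1‖ := by
        calc ‖v₀ - (q ⬝ᵥ (X n).1) • (X n).1‖ ≤ ‖v₀‖ + ‖(q ⬝ᵥ (X n).1) • (X n).1‖ :=
              norm_sub_le _ _
        _ = ‖v₀‖ + |cs n| * ‖(X n).1‖ := by rw [norm_smul, Real.norm_eq_abs]
      have h3 : ‖v₀‖ ≤ W * (1 - κ) := (div_le_iff₀ h1κ).mp (le_max_right _ _)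
      have h4 : |cs n| * ‖(X n).1‖ ≤ κ * W :=
        mul_le_mul (hcsκ n) ih (norm_nonneg _) hκ0.le
      nlinarith
  have hQ0 : 0 ≤ Q := le_trans (norm_nonneg _) (le_max_left _ _)
  have hQb : ∀ n, ‖(X n).2‖ ≤ Q := by
    intro n
    induction n with
    | zero => exact le_max_left _ _
    | succ n ih =>
      rw [hXs]
      show ‖q - (q ⬝ᵥ (X n).1) • (X n).2‖ ≤ Q
      have h2 : ‖q - (q ⬝ᵥ (X n).1) • (X n).2‖ ≤ ‖q‖ + |cs n| * ‖(X n).2‖ := by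
        calc ‖q - (q ⬝ᵥ (X n).1) • (X n).2‖ ≤ ‖q‖ + ‖(q ⬝ᵥ (X n).1) • (X n).2‖ :=
              norm_sub_le _ _
        _ = ‖q‖ + |cs n| * ‖(X n).2‖ := by rw [norm_smul, Real.norm_eq_abs]
      have h3 : ‖q‖ ≤ Q * (1 - κ) := (div_le_iff₀ h1κ).mp (le_max_right _ _)
      have h4 : |cs n| * ‖(X n).2‖ ≤ κ * Q :=
        mul_le_mul (hcsκ n) ih (norm_nonneg _) hκ0.le
      nlinarith
  -- compactness: extract a convergent subsequence
  have hcomp : IsCompact ((Metric.closedBall (0 : V2) W) ×ˢ (Metric.closedBall (0 : V2) Q)) :=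
    (isCompact_closedBall _ _).prod (isCompact_closedBall _ _)
  have hmem : ∀ n, X n ∈ (Metric.closedBall (0 : V2) W) ×ˢ (Metric.closedBall (0 : V2) Q) := by
    intro n
    refine ⟨?_, ?_⟩
    · rw [Metric.mem_closedBall, dist_zero_right]; exact hWb n
    · rw [Metric.mem_closedBall, dist_zero_right]; exact hQb n
  obtain ⟨p, hp, φ, hφmono, hφlim⟩ := hcomp.tendsto_subseq hmem
  have hw : Tendsto (fun n => (X (φ n)).1) atTop (nhds p.1) :=
    (continuous_fst.tendsto p).comp hφlim
  have hr : Tendsto (fun n => (X (φ n)).2) atTop (nhds p.2) :=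
    (continuous_snd.tendsto p).comp hφlim
  have hdotlim : Tendsto (fun n => (X (φ n)).2 ⬝ᵥ (X (φ n)).1) atTop (nhds (p.2 ⬝ᵥ p.1)) := by
    simp only [dot_eq]
    exact ((tendsto_pi_nhds.mp hr 0).mul (tendsto_pi_nhds.mp hw 0)).add
      ((tendsto_pi_nhds.mp hr 1).mul (tendsto_pi_nhds.mp hw 1))
  have hdot0 : p.2 ⬝ᵥ p.1 = 0 := by
    have hzero : Tendsto (fun n => (X (φ n)).2 ⬝ᵥ (X (φ n)).1) atTop (nhds 0) := by
      have he : (fun n => (X (φ n)).2 ⬝ᵥ (X (φ n)).1) = fun _ => (0 : ℝ) :=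
        funext fun n => (master (φ n)).2.1
      rw [he]; exact tendsto_const_nhds
    exact tendsto_nhds_unique hdotlim hzero
  set b : ℕ → SL2 := fun n => conjSeq u₀ γ (φ (n + 1) + 1) * (conjSeq u₀ γ (φ n + 1))⁻¹ with hb
  have hbΓ : ∀ n, b n ∈ Γ := fun n =>
    Γ.mul_mem (conjSeq_mem Γ hu₀ hγ _) (Γ.inv_mem (conjSeq_mem Γ hu₀ hγ _))
  have hbcoe : ∀ n, ((b n : SL2) : M2)
      = (1 + vecMulVec (X (φ (n + 1))).1 (X (φ (n + 1))).2)
        * (1 - vecMulVec (X (φ n)).1 (X (φ n)).2) := by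
    intro n
    show ((conjSeq u₀ γ (φ (n + 1) + 1) * (conjSeq u₀ γ (φ n + 1))⁻¹ : SL2) : M2) = _
    rw [Matrix.SpecialLinearGroup.coe_mul, (master (φ (n + 1))).1,
      inv_one_add_vmv (master (φ n)).1 (master (φ n)).2.1]
  have hw1 : Tendsto (fun n => (X (φ (n + 1))).1) atTop (nhds p.1) :=
    hw.comp (Filter.tendsto_add_atTop_nat 1)
  have hr1 : Tendsto (fun n => (X (φ (n + 1))).2) atTop (nhds p.2) :=
    hr.comp (Filter.tendsto_add_atTop_nat 1)
  have hblim : Tendsto (fun n => ((b n : SL2) : M2)) atTop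
      (nhds ((1 + vecMulVec p.1 p.2) * (1 - vecMulVec p.1 p.2))) := by
    simp only [hbcoe]
    exact (tendsto_const_nhds.add (tendsto_vmv _ _ _ _ hw1 hr1)).mul
      (tendsto_const_nhds.sub (tendsto_vmv _ _ _ _ hw hr))
  have hlim1 : ((1 + vecMulVec p.1 p.2) * (1 - vecMulVec p.1 p.2) : M2) = 1 := by
    have hAA : (vecMulVec p.1 p.2 * vecMulVec p.1 p.2 : M2) = 0 := by
      rw [vmv_mul_vmv, hdot0, zero_smul]
    have he : ((1 + vecMulVec p.1 p.2) * (1 - vecMulVec p.1 p.2) : M2)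
        = 1 - vecMulVec p.1 p.2 * vecMulVec p.1 p.2 := by noncomm_ring
    rw [he, hAA, sub_zero]
  rw [hlim1] at hblim
  obtain ⟨n, hn⟩ := (discrete_eventually_one Γ hd b hbΓ hblim).exists
  have heq : conjSeq u₀ γ (φ (n + 1) + 1) = conjSeq u₀ γ (φ n + 1) := mul_inv_eq_one.mp hn
  have hmeq : (1 : M2) + vecMulVec (X (φ (n + 1))).1 (X (φ (n + 1))).2
      = 1 + vecMulVec (X (φ n)).1 (X (φ n)).2 := by
    rw [← (master (φ (n + 1))).1, ← (master (φ n)).1, heq]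
  have happ : ∀ m, q ⬝ᵥ (((1 : M2) + vecMulVec (X m).1 (X m).2) *ᵥ v₀) = -(cs m ^ 2) := by
    intro m
    rw [Matrix.add_mulVec, Matrix.one_mulVec, vmv_mulVec, dot_add_smul, hqv, (master m).2.2]
    show 0 + -(cs m) * cs m = -(cs m ^ 2)
    ring
  have hc2 : -(cs (φ (n + 1)) ^ 2) = -(cs (φ n) ^ 2) := by
    rw [← happ (φ (n + 1)), ← happ (φ n), hmeq]
  have hsq : cs (φ (n + 1)) ^ 2 = cs (φ n) ^ 2 := by linarith
  have habs : |cs (φ (n + 1))| = |cs (φ n)| := by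
    rw [← sq_abs, ← sq_abs (cs (φ n))] at hsq
    nlinarith [abs_nonneg (cs (φ (n + 1))), abs_nonneg (cs (φ n)), hsq]
  exact absurd habs (ne_of_lt (hanti (hφmono (Nat.lt_succ_self n))))

lemma dot_smul (a : V2) (t : ℝ) (x : V2) : a ⬝ᵥ (t • x) = t * (a ⬝ᵥ x) := by
  simp [dot_eq]; try ring

lemma smul_dot (t : ℝ) (a x : V2) : (t • a) ⬝ᵥ x = t * (a ⬝ᵥ x) := by
  simp [dot_eq]; try ring

lemma mulVec_smul' (A : M2) (t : ℝ) (x : V2) : A *ᵥ (t • x) = t • (A *ᵥ x) := by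
  funext i; fin_cases i <;> simp [mulVec_eq] <;> ring

lemma no_small_conj (Γ : Subgroup SL2) (hd : DiscreteTopology Γ)
    (u₀ : SL2) (hu₀ : u₀ ∈ Γ) (N₀ : M2) (hN₀ : N₀ ≠ 0) (hu : (u₀ : M2) = 1 + N₀)
    (δ : SL2) (hδ : δ ∈ Γ) (κ : ℝ) (hκ0 : 0 < κ) (hκ1 : κ < 1)
    (hconj : (δ : M2) * N₀ * ((δ⁻¹ : SL2) : M2) = κ • N₀) : False := by
  have key : ∀ n : ℕ, ((δ ^ n * u₀ * (δ ^ n)⁻¹ : SL2) : M2) = 1 + κ ^ n • N₀ := by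
    intro n
    induction n with
    | zero => simpa using hu
    | succ n ih =>
      have h1 : (δ ^ (n + 1) * u₀ * (δ ^ (n + 1))⁻¹ : SL2)
          = δ * (δ ^ n * u₀ * (δ ^ n)⁻¹) * δ⁻¹ := by
        rw [pow_succ']
        group
      rw [h1, Matrix.SpecialLinearGroup.coe_mul, Matrix.SpecialLinearGroup.coe_mul, ih,
        mul_add, mul_one, add_mul, coe_mul_inv, mul_smul_comm, smul_mul_assoc, hconj,
        smul_smul]
      rw [show κ ^ n * κ = κ ^ (n + 1) by rw [pow_succ]]
  have hmem : ∀ n : ℕ, (δ ^ n * u₀ * (δ ^ n)⁻¹ : SL2) ∈ Γ := fun n =>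
    Γ.mul_mem (Γ.mul_mem (Γ.pow_mem hδ n) hu₀) (Γ.inv_mem (Γ.pow_mem hδ n))
  have hlim : Filter.Tendsto (fun n => ((δ ^ n * u₀ * (δ ^ n)⁻¹ : SL2) : M2))
      Filter.atTop (nhds 1) := by
    simp only [key]
    have h0 : Filter.Tendsto (fun n : ℕ => κ ^ n • N₀) Filter.atTop (nhds ((0 : ℝ) • N₀)) :=
      (tendsto_pow_atTop_nhds_zero_of_lt_one hκ0.le hκ1).smul tendsto_const_nhds
    rw [zero_smul] at h0
    have hone : Filter.Tendsto (fun _ : ℕ => (1 : M2)) Filter.atTop (nhds (1 : M2)) :=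
      tendsto_const_nhds
    have hsum := hone.add h0
    rw [add_zero] at hsum
    exact hsum
  obtain ⟨n, hn⟩ := (discrete_eventually_one Γ hd _ hmem hlim).exists
  have : (1 : M2) + κ ^ n • N₀ = 1 := by
    rw [← key n, hn]
    simp
  have h0 : κ ^ n • N₀ = 0 := by
    have := congrArg (fun A => A - 1) this
    simpa using this
  rcases smul_eq_zero.mp h0 with h | h
  · exact pow_ne_zero n hκ0.ne' h
  · exact hN₀ h

lemma eigen_pm (Γ : Subgroup SL2) (hd : DiscreteTopology Γ)
    (u₀ : SL2) (hu₀ : u₀ ∈ Γ) (v₀ q : V2) (hv₀ : v₀ ≠ 0) (hq : q ≠ 0)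
    (huc : (u₀ : M2) = 1 + vecMulVec v₀ q) (hqv : q ⬝ᵥ v₀ = 0)
    (δ : SL2) (hδ : δ ∈ Γ) (l : ℝ) (hl : (δ : M2) *ᵥ v₀ = l • v₀) :
    l = 1 ∨ l = -1 := by
  by_contra hcon
  push_neg at hcon
  obtain ⟨hne1, hne2⟩ := hcon
  have hl0 : l ≠ 0 := by
    intro h0
    apply hv₀
    have hv : ((δ⁻¹ : SL2) : M2) *ᵥ ((δ : M2) *ᵥ v₀) = v₀ := by
      rw [Matrix.mulVec_mulVec, coe_inv_mul, Matrix.one_mulVec]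
    rw [hl, h0, zero_smul, Matrix.mulVec_zero] at hv
    exact hv.symm
  have hinv : ((δ⁻¹ : SL2) : M2) *ᵥ v₀ = l⁻¹ • v₀ := by
    have hv : ((δ⁻¹ : SL2) : M2) *ᵥ ((δ : M2) *ᵥ v₀) = v₀ := by
      rw [Matrix.mulVec_mulVec, coe_inv_mul, Matrix.one_mulVec]
    rw [hl, mulVec_smul'] at hv
    calc ((δ⁻¹ : SL2) : M2) *ᵥ v₀ = l⁻¹ • (l • (((δ⁻¹ : SL2) : M2) *ᵥ v₀)) := by
          rw [smul_smul, inv_mul_cancel₀ hl0, one_smul]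
    _ = l⁻¹ • v₀ := by rw [hv]
  -- the covector q ᵥ* δ⁻¹ is parallel to pp v₀
  have hrv : (q ᵥ* ((δ⁻¹ : SL2) : M2)) ⬝ᵥ v₀ = 0 := by
    rw [← Matrix.dotProduct_mulVec, hinv, dot_smul, hqv, mul_zero]
  obtain ⟨t, ht⟩ := perp2 hv₀ hrv
  obtain ⟨τ, hτ⟩ := perp2 hv₀ hqv
  have hτ0 : τ ≠ 0 := by
    intro h0
    exact hq (by rw [hτ, h0, zero_smul])
  -- determinant computation shows t = l * τ
  have hspos : 0 < det2 v₀ (pp v₀) := by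
    have hs : det2 v₀ (pp v₀) = v₀ 0 * v₀ 0 + v₀ 1 * v₀ 1 := by
      simp only [det2, pp, Matrix.cons_val_zero, Matrix.cons_val_one, Matrix.head_cons]
      ring
    rw [hs]
    rcases v2_ne_zero hv₀ with h | h
    · nlinarith [mul_self_pos.mpr h, mul_self_nonneg (v₀ 1)]
    · nlinarith [mul_self_pos.mpr h, mul_self_nonneg (v₀ 0)]
  have hdet : det2 (((δ⁻¹ : SL2) : M2) *ᵥ v₀) (((δ⁻¹ : SL2) : M2) *ᵥ pp v₀)
      = det2 v₀ (pp v₀) := by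
    rw [det2_mulVec, Matrix.SpecialLinearGroup.det_coe, one_mul]
  rw [hinv, det2_smul_left] at hdet
  -- det2 v₀ (δ⁻¹ pp v₀) in two ways
  have hway1 : τ * det2 v₀ (((δ⁻¹ : SL2) : M2) *ᵥ pp v₀) = t * det2 v₀ (pp v₀) := by
    have e1 : q ⬝ᵥ (((δ⁻¹ : SL2) : M2) *ᵥ pp v₀) = t * det2 v₀ (pp v₀) := by
      rw [Matrix.dotProduct_mulVec, ht, smul_dot, pp_dot]
    have e2 : q ⬝ᵥ (((δ⁻¹ : SL2) : M2) *ᵥ pp v₀)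
        = τ * det2 v₀ (((δ⁻¹ : SL2) : M2) *ᵥ pp v₀) := by
      rw [hτ, smul_dot, pp_dot]
    rw [← e2, e1]
  have htl : t = l * τ := by
    have e3 : det2 v₀ (((δ⁻¹ : SL2) : M2) *ᵥ pp v₀) = l * det2 v₀ (pp v₀) := by
      have e := congrArg (l * ·) hdet
      beta_reduce at e
      rw [← mul_assoc, mul_inv_cancel₀ hl0, one_mul] at e
      exact e
    rw [e3] at hway1
    have h' : (τ * l) * det2 v₀ (pp v₀) = t * det2 v₀ (pp v₀) := by
      rw [mul_assoc]; exact hway1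
    have h'' := mul_right_cancel₀ hspos.ne' h'
    rw [← h'']; ring
  -- conjugation scales N₀ by l²
  have hcovec : q ᵥ* ((δ⁻¹ : SL2) : M2) = l • q := by
    rw [ht, htl, mul_smul, ← hτ]
  have hconj : (δ : M2) * vecMulVec v₀ q * ((δ⁻¹ : SL2) : M2) = (l * l) • vecMulVec v₀ q := by
    rw [mul_vmv, vmv_mul, hl, hcovec, vmv_smul_left, vmv_smul_right, smul_smul]
  have hN₀ : vecMulVec v₀ q ≠ 0 := vmv_ne_zero hv₀ hq
  have hκ0 : 0 < l * l := mul_self_pos.mpr hl0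
  have hκ1 : l * l ≠ 1 := by
    intro h
    rcases mul_self_eq_one_iff.mp h with h | h
    · exact hne1 h
    · exact hne2 h
  rcases lt_or_gt_of_ne hκ1 with hlt | hgt
  · exact no_small_conj Γ hd u₀ hu₀ _ hN₀ huc δ hδ (l * l) hκ0 hlt hconj
  · have hconj' : ((δ⁻¹ : SL2) : M2) * vecMulVec v₀ q * (((δ⁻¹)⁻¹ : SL2) : M2)
        = (l * l)⁻¹ • vecMulVec v₀ q := by
      rw [inv_inv]
      have e := congrArg (fun A => ((δ⁻¹ : SL2) : M2) * A * (δ : M2)) hconj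
      beta_reduce at e
      have lhs : ((δ⁻¹ : SL2) : M2) * ((δ : M2) * vecMulVec v₀ q * ((δ⁻¹ : SL2) : M2)) * (δ : M2)
          = vecMulVec v₀ q := by
        calc ((δ⁻¹ : SL2) : M2) * ((δ : M2) * vecMulVec v₀ q * ((δ⁻¹ : SL2) : M2)) * (δ : M2)
            = (((δ⁻¹ : SL2) : M2) * (δ : M2)) * vecMulVec v₀ q
              * (((δ⁻¹ : SL2) : M2) * (δ : M2)) := by noncomm_ring
        _ = vecMulVec v₀ q := by rw [coe_inv_mul, one_mul, mul_one]
      rw [lhs] at e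
      have rhs : ((δ⁻¹ : SL2) : M2) * ((l * l) • vecMulVec v₀ q) * (δ : M2)
          = (l * l) • (((δ⁻¹ : SL2) : M2) * vecMulVec v₀ q * (δ : M2)) := by
        rw [mul_smul_comm, smul_mul_assoc]
      rw [rhs] at e
      calc ((δ⁻¹ : SL2) : M2) * vecMulVec v₀ q * (δ : M2)
          = (l * l)⁻¹ • ((l * l) • (((δ⁻¹ : SL2) : M2) * vecMulVec v₀ q * (δ : M2))) := by
            rw [smul_smul, inv_mul_cancel₀ hκ0.ne', one_smul]
      _ = (l * l)⁻¹ • vecMulVec v₀ q := by rw [← e]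
    exact no_small_conj Γ hd u₀ hu₀ _ hN₀ huc δ⁻¹ (Γ.inv_mem hδ) ((l * l)⁻¹)
      (by positivity) (by rw [inv_lt_one_iff₀]; right; exact hgt) hconj'

lemma mulVec_ne_zero (a : SL2) {x : V2} (hx : x ≠ 0) : (a : M2) *ᵥ x ≠ 0 := by
  intro h
  apply hx
  have h2 : ((a⁻¹ : SL2) : M2) *ᵥ ((a : M2) *ᵥ x) = x := by
    rw [Matrix.mulVec_mulVec, coe_inv_mul, Matrix.one_mulVec]
  rw [h, Matrix.mulVec_zero] at h2
  exact h2.symm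

lemma exp_chord (a b : ℝ) :
    ‖Complex.exp (a * Complex.I) - Complex.exp (b * Complex.I)‖ ≤ 2 * |a - b| := by
  have h1 : Complex.exp (↑a * Complex.I) - Complex.exp (↑b * Complex.I)
      = Complex.exp (↑b * Complex.I) * (Complex.exp (↑(a - b) * Complex.I) - 1) := by
    rw [mul_sub, mul_one, ← Complex.exp_add]
    congr 2
    push_cast
    ring
  rw [h1, norm_mul, Complex.norm_exp_ofReal_mul_I, one_mul]
  rcases le_or_gt |a - b| 1 with h | h
  · have h3 : ‖(↑(a - b) * Complex.I)‖ ≤ 1 := by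
      rw [norm_mul, Complex.norm_I, mul_one, Complex.norm_real, Real.norm_eq_abs]; exact h
    have h4 := Complex.norm_exp_sub_one_le h3
    rw [norm_mul, Complex.norm_I, mul_one, Complex.norm_real, Real.norm_eq_abs] at h4
    exact h4
  · have h5 : ‖Complex.exp (↑(a - b) * Complex.I) - 1‖
        ≤ ‖Complex.exp (↑(a - b) * Complex.I)‖ + ‖(1 : ℂ)‖ :=
      norm_sub_le _ _
    rw [Complex.norm_exp_ofReal_mul_I, norm_one] at h5
    linarith

lemma im_conj_mul_le (u₁ u₂ : ℂ) (h1 : ‖u₁‖ = 1) :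
    |((starRingEnd ℂ) u₁ * u₂).im| ≤ ‖u₁ - u₂‖ := by
  have e : (starRingEnd ℂ) u₁ * u₂ = (starRingEnd ℂ) u₁ * (u₂ - u₁) + u₁ * (starRingEnd ℂ) u₁ := by
    ring
  have e2 : (u₁ * (starRingEnd ℂ) u₁).im = 0 := by rw [Complex.mul_conj]; simp
  rw [e, Complex.add_im, e2, add_zero]
  calc |((starRingEnd ℂ) u₁ * (u₂ - u₁)).im|
      ≤ ‖(starRingEnd ℂ) u₁ * (u₂ - u₁)‖ := Complex.abs_im_le_norm _
  _ = ‖u₂ - u₁‖ := by rw [norm_mul, Complex.norm_conj, h1, one_mul]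
  _ = ‖u₁ - u₂‖ := norm_sub_rev _ _

set_option maxHeartbeats 1000000 in
lemma final (Γ : Subgroup SL2) (hd : DiscreteTopology Γ)
    (Λ : Subgroup SL2) (hΛΓ : Λ ≤ Γ)
    (hΛuni : ∀ γ ∈ Λ, IsUnipotent γ) (hΛne : Λ ≠ ⊥)
    (v : Euc2) (hv : v ≠ 0)
    (hfix : ∀ γ ∈ Λ, matVec (γ : M2) v = v) :
    ∃ τ : ℝ, ∀ R : ℝ, 0 < R → ∀ g : SL2,
      (Nat.card ↥(orbitSet Γ g v ∩ Metric.ball (0 : Euc2) R) : ℝ) < τ * (R ^ 2 + 1) := by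
  classical
  set v₀ : V2 := (EuclideanSpace.equiv (Fin 2) ℝ) v with hv₀def
  have hv₀ : v₀ ≠ 0 := by
    intro h
    apply hv
    have h2 : v = (EuclideanSpace.equiv (Fin 2) ℝ).symm v₀ :=
      ((EuclideanSpace.equiv (Fin 2) ℝ).symm_apply_apply v).symm
    rw [h2, h]
    rfl
  obtain ⟨u₀, hu₀Λ, hu₀ne⟩ : ∃ u ∈ Λ, u ≠ 1 := by
    by_contra hcc
    push_neg at hcc
    exact hΛne ((Subgroup.eq_bot_iff_forall Λ).mpr hcc)
  have hu₀Γ : u₀ ∈ Γ := hΛΓ hu₀Λ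
  have hN2 : ((u₀ : M2) - 1) * ((u₀ : M2) - 1) = 0 := by
    have h := hΛuni u₀ hu₀Λ
    rw [IsUnipotent, sq] at h
    exact h
  have hNne : (u₀ : M2) - 1 ≠ 0 := by
    intro h
    apply hu₀ne
    have h1 : (u₀ : M2) = 1 := by rwa [sub_eq_zero] at h
    exact Subtype.coe_injective (by simpa using h1)
  have hNv : ((u₀ : M2) - 1) *ᵥ v₀ = 0 := by
    have hf := hfix u₀ hu₀Λ
    have h2 : (u₀ : M2) *ᵥ v₀ = v₀ := by
      have h3 := congrArg (EuclideanSpace.equiv (Fin 2) ℝ) hf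
      rw [matVec, ContinuousLinearEquiv.apply_symm_apply] at h3
      exact h3
    rw [Matrix.sub_mulVec, h2, Matrix.one_mulVec, sub_self]
  obtain ⟨τ₁, hτ₁0, hNeq⟩ := unip_structure hv₀ hNne hN2 hNv
  set q : V2 := τ₁ • pp v₀ with hqdef
  have hqv : q ⬝ᵥ v₀ = 0 := by
    rw [hqdef, smul_dot, pp_dot]
    have h : det2 v₀ v₀ = 0 := by unfold det2; ring
    rw [h, mul_zero]
  have hqne : q ≠ 0 := by
    intro h
    apply hNne
    rw [hNeq, h]
    ext i j
    simp [Matrix.vecMulVec_apply]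
  have hu₀coe : (u₀ : M2) = 1 + vecMulVec v₀ q := by
    exact (sub_eq_iff_eq_add.mp hNeq).trans (add_comm _ _)
  set ε : ℝ := 1 / |τ₁| with hεdef
  have hε0 : 0 < ε := by
    have h := abs_pos.mpr hτ₁0
    rw [hεdef]
    positivity
  refine ⟨4 * Real.pi / ε + 4 * Real.pi + 2, ?_⟩
  intro R hR g
  set T : Set Euc2 := orbitSet Γ g v ∩ Metric.ball (0 : Euc2) R with hTdef
  set d : ℝ := min (ε / R ^ 2) 2 with hddef
  have hd0 : 0 < d := lt_min (by positivity) (by norm_num)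
  have hd2 : d ≤ 2 := min_le_right _ _
  set z : Euc2 → ℂ := fun w => (w 0 : ℂ) + (w 1 : ℂ) * Complex.I with hzdef
  have hzre : ∀ w : Euc2, (z w).re = w 0 := by intro w; simp [hzdef]
  have hzim : ∀ w : Euc2, (z w).im = w 1 := by intro w; simp [hzdef]
  have hzabs : ∀ w : Euc2, ‖z w‖ = ‖w‖ := by
    intro w
    rw [Complex.norm_def, Complex.normSq_apply, hzre, hzim, EuclideanSpace.norm_eq]
    congr 1
    rw [Fin.sum_univ_two]
    simp only [Real.norm_eq_abs, sq_abs]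
    ring
  have hWrep : ∀ w ∈ T, ∃ γ : SL2, γ ∈ Γ ∧
      (EuclideanSpace.equiv (Fin 2) ℝ) w = ((g * γ : SL2) : M2) *ᵥ v₀ := by
    intro w hw
    obtain ⟨γ, hγ, hm⟩ := hw.1
    exact ⟨γ, hγ, by rw [← hm, matVec, ContinuousLinearEquiv.apply_symm_apply]⟩
  -- key angular separation
  have key : ∀ w₁ ∈ T, ∀ w₂ ∈ T, w₁ ≠ w₂ →
      d / 2 ≤ |Complex.arg (z w₁) - Complex.arg (z w₂)| := by
    intro w₁ hw₁ w₂ hw₂ hnew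
    obtain ⟨γ₁, hγ₁, hW₁⟩ := hWrep w₁ hw₁
    obtain ⟨γ₂, hγ₂, hW₂⟩ := hWrep w₂ hw₂
    have hn₁ : ‖w₁‖ < R := mem_ball_zero_iff.mp hw₁.2
    have hn₂ : ‖w₂‖ < R := mem_ball_zero_iff.mp hw₂.2
    have hW₁ne : (EuclideanSpace.equiv (Fin 2) ℝ) w₁ ≠ 0 := by
      rw [hW₁]; exact mulVec_ne_zero _ hv₀
    have hW₂ne : (EuclideanSpace.equiv (Fin 2) ℝ) w₂ ≠ 0 := by
      rw [hW₂]; exact mulVec_ne_zero _ hv₀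
    have hz₁ne : z w₁ ≠ 0 := by
      intro h0
      apply hW₁ne
      have habs0 : ‖z w₁‖ = 0 := by rw [h0]; simp
      rw [hzabs] at habs0
      have hw0 : w₁ = 0 := norm_eq_zero.mp habs0
      rw [hw0]
      rfl
    have hz₂ne : z w₂ ≠ 0 := by
      intro h0
      apply hW₂ne
      have habs0 : ‖z w₂‖ = 0 := by rw [h0]; simp
      rw [hzabs] at habs0
      have hw0 : w₂ = 0 := norm_eq_zero.mp habs0
      rw [hw0]
      rfl
    set r₁ : ℝ := ‖z w₁‖ with hr₁def
    set r₂ : ℝ := ‖z w₂‖ with hr₂def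
    have hr₁pos : 0 < r₁ := norm_pos_iff.mpr hz₁ne
    have hr₂pos : 0 < r₂ := norm_pos_iff.mpr hz₂ne
    set θ₁ : ℝ := Complex.arg (z w₁) with hθ₁def
    set θ₂ : ℝ := Complex.arg (z w₂) with hθ₂def
    set u₁ : ℂ := Complex.exp (θ₁ * Complex.I) with hu₁def
    set u₂ : ℂ := Complex.exp (θ₂ * Complex.I) with hu₂def
    have hrep₁ : (r₁ : ℂ) * u₁ = z w₁ := Complex.norm_mul_exp_arg_mul_I (z w₁)
    have hrep₂ : (r₂ : ℂ) * u₂ = z w₂ := Complex.norm_mul_exp_arg_mul_I (z w₂)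
    have hu₁abs : ‖u₁‖ = 1 := Complex.norm_exp_ofReal_mul_I θ₁
    have hu₂abs : ‖u₂‖ = 1 := Complex.norm_exp_ofReal_mul_I θ₂
    -- it suffices to bound the chord
    suffices hchord : d ≤ ‖u₁ - u₂‖ by
      have hc2 := exp_chord θ₁ θ₂
      rw [← hu₁def, ← hu₂def] at hc2
      linarith
    -- determinant dichotomy
    have hdet_eq : det2 ((EuclideanSpace.equiv (Fin 2) ℝ) w₁) ((EuclideanSpace.equiv (Fin 2) ℝ) w₂)
        = det2 v₀ (((γ₁⁻¹ * γ₂ : SL2) : M2) *ᵥ v₀) := by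
      have h1 : ((g * γ₂ : SL2) : M2) *ᵥ v₀
          = ((g * γ₁ : SL2) : M2) *ᵥ (((γ₁⁻¹ * γ₂ : SL2) : M2) *ᵥ v₀) := by
        rw [Matrix.mulVec_mulVec, ← Matrix.SpecialLinearGroup.coe_mul]
        have e : (g * γ₁ * (γ₁⁻¹ * γ₂) : SL2) = g * γ₂ := by group
        rw [e]
      rw [hW₁, hW₂, h1, det2_mulVec, Matrix.SpecialLinearGroup.det_coe, one_mul]
    have hmemD : (γ₁⁻¹ * γ₂ : SL2) ∈ Γ := Γ.mul_mem (Γ.inv_mem hγ₁) hγ₂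
    have hq_det : q ⬝ᵥ (((γ₁⁻¹ * γ₂ : SL2) : M2) *ᵥ v₀)
        = τ₁ * det2 v₀ (((γ₁⁻¹ * γ₂ : SL2) : M2) *ᵥ v₀) := by
      rw [hqdef, smul_dot, pp_dot]
    rcases shimizu Γ hd u₀ hu₀Γ v₀ q hu₀coe hqv (γ₁⁻¹ * γ₂) hmemD with hc0 | hc1
    · -- parallel case : w₂ = -w₁
      have hdet0 : det2 ((EuclideanSpace.equiv (Fin 2) ℝ) w₁)
          ((EuclideanSpace.equiv (Fin 2) ℝ) w₂) = 0 := by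
        rw [hdet_eq]
        have h : τ₁ * det2 v₀ (((γ₁⁻¹ * γ₂ : SL2) : M2) *ᵥ v₀) = 0 := by rw [← hq_det, hc0]
        rcases mul_eq_zero.mp h with h' | h'
        · exact absurd h' hτ₁0
        · exact h'
      obtain ⟨t, hpar⟩ := det2_zero_parallel hW₁ne hdet0
      have h2 : ((γ₁⁻¹ * γ₂ : SL2) : M2) *ᵥ v₀ = t • v₀ := by
        have h3 : ((g * γ₂ : SL2) : M2) *ᵥ v₀ = t • (((g * γ₁ : SL2) : M2) *ᵥ v₀) := by
          rw [← hW₁, ← hW₂]; exact hpar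
        have h4 := congrArg (fun y => (((g * γ₁)⁻¹ : SL2) : M2) *ᵥ y) h3
        beta_reduce at h4
        rw [Matrix.mulVec_mulVec, ← Matrix.SpecialLinearGroup.coe_mul, mulVec_smul',
          Matrix.mulVec_mulVec, ← Matrix.SpecialLinearGroup.coe_mul] at h4
        have e5 : ((g * γ₁)⁻¹ * (g * γ₂) : SL2) = γ₁⁻¹ * γ₂ := by group
        have e6 : ((g * γ₁)⁻¹ * (g * γ₁) : SL2) = 1 := by group
        rw [e5, e6, Matrix.SpecialLinearGroup.coe_one, Matrix.one_mulVec] at h4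
        exact h4
      rcases eigen_pm Γ hd u₀ hu₀Γ v₀ q hv₀ hqne hu₀coe hqv (γ₁⁻¹ * γ₂) hmemD t h2 with h | h
      · -- t = 1 : contradiction with w₁ ≠ w₂
        exfalso
        apply hnew
        apply (EuclideanSpace.equiv (Fin 2) ℝ).injective
        rw [hpar, h, one_smul]
      · -- t = -1 : antipodal points
        rw [h] at hpar
        have hz2 : z w₂ = - z w₁ := by
          have h0 : w₂ 0 = -(w₁ 0) := by
            have := congrFun hpar 0
            simpa using this
          have h1 : w₂ 1 = -(w₁ 1) := by
            have := congrFun hpar 1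
            simpa using this
          rw [hzdef]
          simp only []
          rw [h0, h1]
          push_cast
          ring
        have hr21 : r₂ = r₁ := by
          rw [hr₂def, hr₁def, hz2, ← neg_one_mul, norm_mul]
          simp
        have hu2eq : u₂ = - u₁ := by
          have h1 : (r₂ : ℂ) ≠ 0 := by exact_mod_cast hr₂pos.ne'
          apply mul_left_cancel₀ h1
          rw [hrep₂, hz2, ← hrep₁, hr21]
          ring
        have habs2 : ‖u₁ - u₂‖ = 2 := by
          rw [hu2eq, sub_neg_eq_add]
          have : u₁ + u₁ = 2 * u₁ := by ring
          rw [this, norm_mul, hu₁abs]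
          simp
        rw [habs2]
        exact hd2
    · -- transversal case : big determinant
      have hDabs : ε ≤ |det2 ((EuclideanSpace.equiv (Fin 2) ℝ) w₁)
          ((EuclideanSpace.equiv (Fin 2) ℝ) w₂)| := by
        rw [hdet_eq]
        have h : det2 v₀ (((γ₁⁻¹ * γ₂ : SL2) : M2) *ᵥ v₀)
            = (q ⬝ᵥ (((γ₁⁻¹ * γ₂ : SL2) : M2) *ᵥ v₀)) / τ₁ := by
          rw [hq_det]
          field_simp
        rw [h, abs_div, hεdef]
        gcongr
      have himD : ((starRingEnd ℂ) (z w₁) * (z w₂)).im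
          = det2 ((EuclideanSpace.equiv (Fin 2) ℝ) w₁) ((EuclideanSpace.equiv (Fin 2) ℝ) w₂) := by
        rw [Complex.mul_im, Complex.conj_re, Complex.conj_im, hzre, hzim, hzre, hzim]
        show w₁ 0 * w₂ 1 + -(w₁ 1) * w₂ 0 = det2 (fun i => w₁ i) (fun i => w₂ i)
        unfold det2
        ring
      have hscale : ((starRingEnd ℂ) (z w₁) * (z w₂)).im
          = r₁ * r₂ * ((starRingEnd ℂ) u₁ * u₂).im := by
        rw [← hrep₁, ← hrep₂, _root_.map_mul, Complex.conj_ofReal]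
        have e : ((r₁ : ℂ) * (starRingEnd ℂ) u₁) * ((r₂ : ℂ) * u₂)
            = (((r₁ * r₂ : ℝ) : ℂ)) * ((starRingEnd ℂ) u₁ * u₂) := by
          push_cast
          ring
        rw [e, Complex.mul_im]
        simp [Complex.ofReal_re, Complex.ofReal_im]
        try ring
      have him_le := im_conj_mul_le u₁ u₂ hu₁abs
      have hbound : ε ≤ R ^ 2 * ‖u₁ - u₂‖ := by
        have h1 : ε ≤ r₁ * r₂ * |((starRingEnd ℂ) u₁ * u₂).im| := by
          calc ε ≤ |((starRingEnd ℂ) (z w₁) * (z w₂)).im| := by rw [himD]; exact hDabs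
          _ = r₁ * r₂ * |((starRingEnd ℂ) u₁ * u₂).im| := by
              rw [hscale, abs_mul, abs_of_pos (mul_pos hr₁pos hr₂pos)]
        have h2 : r₁ * r₂ * |((starRingEnd ℂ) u₁ * u₂).im|
            ≤ R ^ 2 * ‖u₁ - u₂‖ := by
          have hr₁R : r₁ ≤ R := by rw [hr₁def, hzabs]; exact hn₁.le
          have hr₂R : r₂ ≤ R := by rw [hr₂def, hzabs]; exact hn₂.le
          have habsnn : 0 ≤ |((starRingEnd ℂ) u₁ * u₂).im| := abs_nonneg _
          have hprod : r₁ * r₂ ≤ R ^ 2 := by nlinarith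
          calc r₁ * r₂ * |((starRingEnd ℂ) u₁ * u₂).im|
              ≤ R ^ 2 * |((starRingEnd ℂ) u₁ * u₂).im| := by
                apply mul_le_mul_of_nonneg_right hprod habsnn
          _ ≤ R ^ 2 * ‖u₁ - u₂‖ := by
            apply mul_le_mul_of_nonneg_left him_le (by positivity)
        linarith
      have hfinal : ε / R ^ 2 ≤ ‖u₁ - u₂‖ := by
        rw [div_le_iff₀ (by positivity : (0:ℝ) < R ^ 2)]
        linarith [hbound]
      exact le_trans (min_le_left _ _) hfinal
  -- build an injection into `Fin m`
  set s : ℝ := d / 2 with hsdef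
  have hs0 : 0 < s := by rw [hsdef]; positivity
  set m : ℕ := ⌊2 * Real.pi / s⌋₊ + 1 with hmdef
  have hfbound : ∀ w : Euc2, ⌊(Complex.arg (z w) + Real.pi) / s⌋₊ < m := by
    intro w
    have harg1 : Complex.arg (z w) ≤ Real.pi := Complex.arg_le_pi _
    have hle : (Complex.arg (z w) + Real.pi) / s ≤ 2 * Real.pi / s := by
      gcongr
      linarith
    calc ⌊(Complex.arg (z w) + Real.pi) / s⌋₊ ≤ ⌊2 * Real.pi / s⌋₊ := Nat.floor_le_floor hle
    _ < m := Nat.lt_succ_self _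
  have hex : ∃ f : ↥T → Fin m, Function.Injective f := by
    refine ⟨fun w => ⟨⌊(Complex.arg (z (w : Euc2)) + Real.pi) / s⌋₊, hfbound _⟩, ?_⟩
    intro a b hab
    by_contra hne2
    have hvals : ⌊(Complex.arg (z (a : Euc2)) + Real.pi) / s⌋₊
        = ⌊(Complex.arg (z (b : Euc2)) + Real.pi) / s⌋₊ := by
      simpa using congrArg Fin.val hab
    have hneq : (a : Euc2) ≠ (b : Euc2) := fun h => hne2 (Subtype.ext h)
    have hsep := key (a : Euc2) a.2 (b : Euc2) b.2 hneq
    have hmain : ∀ x y : ℝ, -Real.pi < x → x + s ≤ y →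
        ⌊(x + Real.pi) / s⌋₊ ≠ ⌊(y + Real.pi) / s⌋₊ := by
      intro x y hx hxy
      have h1 : (x + Real.pi) / s + 1 ≤ (y + Real.pi) / s := by
        have he : (x + Real.pi) / s + 1 = (x + Real.pi + s) / s := by field_simp
        rw [he, div_le_div_iff_of_pos_right hs0]
        linarith
      have hx0 : 0 ≤ (x + Real.pi) / s := by
        apply div_nonneg ?_ hs0.le
        linarith
      have h2 : ⌊(x + Real.pi) / s⌋₊ + 1 ≤ ⌊(y + Real.pi) / s⌋₊ := by
        calc ⌊(x + Real.pi) / s⌋₊ + 1 = ⌊(x + Real.pi) / s + 1⌋₊ := (Nat.floor_add_one hx0).symm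
        _ ≤ ⌊(y + Real.pi) / s⌋₊ := Nat.floor_le_floor h1
      omega
    rcases le_total (Complex.arg (z (a : Euc2))) (Complex.arg (z (b : Euc2))) with h | h
    · have hxy : Complex.arg (z (a : Euc2)) + s ≤ Complex.arg (z (b : Euc2)) := by
        have := abs_sub_le_iff.mp (le_of_eq (rfl : |Complex.arg (z (a : Euc2)) - Complex.arg (z (b : Euc2))| = _))
        have habs : |Complex.arg (z (a : Euc2)) - Complex.arg (z (b : Euc2))|
            = Complex.arg (z (b : Euc2)) - Complex.arg (z (a : Euc2)) := by
          rw [abs_sub_comm]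
          exact abs_of_nonneg (by linarith)
        rw [habs] at hsep
        linarith
      exact hmain _ _ (Complex.neg_pi_lt_arg _) hxy hvals
    · have hxy : Complex.arg (z (b : Euc2)) + s ≤ Complex.arg (z (a : Euc2)) := by
        have habs : |Complex.arg (z (a : Euc2)) - Complex.arg (z (b : Euc2))|
            = Complex.arg (z (a : Euc2)) - Complex.arg (z (b : Euc2)) := by
          exact abs_of_nonneg (by linarith)
        rw [habs] at hsep
        linarith
      exact (hmain _ _ (Complex.neg_pi_lt_arg _) hxy hvals.symm)
  obtain ⟨f, hfinj⟩ := hex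
  have hcard : Nat.card ↥T ≤ m := by
    have h := Nat.card_le_card_of_injective f hfinj
    simpa using h
  have hm_le : (m : ℝ) ≤ 2 * Real.pi / s + 1 := by
    rw [hmdef]
    push_cast
    have h := Nat.floor_le (by positivity : (0:ℝ) ≤ 2 * Real.pi / s)
    linarith
  have hfin : (Nat.card ↥T : ℝ) ≤ 2 * Real.pi / s + 1 :=
    le_trans (by exact_mod_cast hcard) hm_le
  have h2ps : 2 * Real.pi / s = 4 * Real.pi / d := by
    rw [hsdef]
    field_simp
    ring
  have hd_bound : 4 * Real.pi / d ≤ 4 * Real.pi / ε * R ^ 2 + 2 * Real.pi := by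
    rcases min_cases (ε / R ^ 2) 2 with ⟨heq, _⟩ | ⟨heq, _⟩
    · have he2 : 4 * Real.pi / d = 4 * Real.pi / ε * R ^ 2 := by
        rw [hddef, heq]
        field_simp
      rw [he2]
      linarith [Real.pi_pos]
    · have he2 : 4 * Real.pi / d = 2 * Real.pi := by
        rw [hddef, heq]
        ring
      rw [he2]
      have : 0 ≤ 4 * Real.pi / ε * R ^ 2 := by positivity
      linarith
  calc (Nat.card ↥T : ℝ) ≤ 2 * Real.pi / s + 1 := hfin
  _ = 4 * Real.pi / d + 1 := by rw [h2ps]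
  _ ≤ 4 * Real.pi / ε * R ^ 2 + 2 * Real.pi + 1 := by linarith
  _ < (4 * Real.pi / ε + 4 * Real.pi + 2) * (R ^ 2 + 1) := by
    have hA : 0 ≤ 4 * Real.pi / ε := by positivity
    have hB : 0 ≤ R ^ 2 := sq_nonneg R
    nlinarith [Real.pi_pos, mul_nonneg (by positivity : (0:ℝ) ≤ 4 * Real.pi + 2) hB]

end

end SB

/-- Lemma 16.10: let `Γ` be a nonuniform lattice in `SL(2,ℝ)` with
`−I ∈ Γ`, let `Λ` be a nontrivial maximal unipotent subgroup of `Γ`, and let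
`v ∈ ℝ² ∖ {0}` be fixed by `Λ`.  Then there is `τ = τ(Γ,v) < ∞` with
`Card(gΓv ∩ B(0,R)) < τ(R² + 1)` for all `R > 0` and all `g ∈ SL(2,ℝ)`. -/
theorem lattice_orbit_quadratic_bound (Γ : Subgroup SL2) (hΓ : IsNonuniformLattice Γ)
    (hNegI : ∃ γ : SL2, γ ∈ Γ ∧ (γ : Matrix (Fin 2) (Fin 2) ℝ) = -1)
    (Λ : Subgroup SL2) (hΛΓ : Λ ≤ Γ) (hΛuni : ∀ γ ∈ Λ, IsUnipotent γ)
    (hΛmax : ∀ Λ' : Subgroup SL2, Λ' ≤ Γ → (∀ γ ∈ Λ', IsUnipotent γ) →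
      Λ ≤ Λ' → Λ' = Λ)
    (hΛne : Λ ≠ ⊥)
    (v : Euc2) (hv : v ≠ 0) (hfix : ∀ γ ∈ Λ, matVec (γ : Matrix (Fin 2) (Fin 2) ℝ) v = v) :
    ∃ τ : ℝ, ∀ R : ℝ, 0 < R → ∀ g : SL2,
      (Nat.card ↥(orbitSet Γ g v ∩ ball (0 : Euc2) R) : ℝ) < τ * (R ^ 2 + 1) := by
  exact SB.final Γ hΓ.discrete Λ hΛΓ hΛuni hΛne v hv hfix
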